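/- Let X be a smooth normed space (every point of S_X is a smooth point). If x, y ∈ X satisfy ‖x + λy‖ = ‖x‖ + ‖y‖ for some unimodular λ, then for any x* ∈ J(x) and y* ∈ J(y), the operators x*(·)x and y*(·)y are numerical radius parallel. -/

import Mathlib

open Filter Topology

variable {𝕜 : Type*} [RCLike 𝕜] {X : Type*} [NormedAddCommGroup X] [NormedSpace 𝕜 X]

/-- The numerical radius of a bounded linear operator on a normed space:
`v(T) = sup {|x*(Tx)| : x ∈ S_X, x* ∈ J(x)}`. -/
noncomputable def nrad (T : X →L[𝕜] X) : ℝ :=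
  sSup {r : ℝ | ∃ (x : X) (f : X →L[𝕜] 𝕜), ‖x‖ = 1 ∧ ‖f‖ = 1 ∧ f x = 1 ∧ r = ‖f (T x)‖}

/-- Numerical radius parallelism: `T ∥_v S`. -/
def NRadParallel (T S : X →L[𝕜] X) : Prop :=
  ∃ lam : 𝕜, ‖lam‖ = 1 ∧ nrad (T + lam • S) = nrad T + nrad S

/-- Numerical radius Birkhoff orthogonality: `T ⊥_{vB} S`. -/
def NRadBirkhoff (T S : X →L[𝕜] X) : Prop :=
  ∀ α : 𝕜, nrad T ≤ nrad (T + α • S)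

/-!
Put `u = x + λ y` and let `φ` be a norm-one functional with `φ u = ‖u‖ = ‖x‖ + ‖y‖`. The
equality forces `φ x = ‖x‖` and `φ (λ y) = ‖y‖`, so by smoothness `f = φ` and `g = λ φ`.
Hence `(x*(·)x + y*(·)y) u = ‖u‖ u` and `φ` sees the value `‖u‖`, giving
`v(x*(·)x + y*(·)y) ≥ ‖x‖ + ‖y‖ = v(x*(·)x) + v(y*(·)y)`; the reverse inequality is
subadditivity of `v`.
-/

lemma norm_apply_apply_le_opNorm (T : X →L[𝕜] X) {z : X} {φ : X →L[𝕜] 𝕜}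
    (hz : ‖z‖ = 1) (hφ : ‖φ‖ = 1) : ‖φ (T z)‖ ≤ ‖T‖ :=
  calc ‖φ (T z)‖ ≤ ‖φ‖ * ‖T z‖ := φ.le_opNorm _
    _ ≤ 1 * (‖T‖ * ‖z‖) := by rw [hφ]; gcongr; exact T.le_opNorm z
    _ = ‖T‖ := by rw [hz, mul_one, one_mul]

lemma nrad_le_opNorm (T : X →L[𝕜] X) : nrad T ≤ ‖T‖ :=
  Real.sSup_le (by rintro r ⟨z, φ, hz, hφ, -, rfl⟩; exact norm_apply_apply_le_opNorm T hz hφ)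
    (norm_nonneg T)

lemma nrad_bddAbove (T : X →L[𝕜] X) :
    BddAbove {r : ℝ | ∃ (x : X) (f : X →L[𝕜] 𝕜), ‖x‖ = 1 ∧ ‖f‖ = 1 ∧ f x = 1 ∧ r = ‖f (T x)‖} :=
  ⟨‖T‖, by rintro r ⟨z, φ, hz, hφ, -, rfl⟩; exact norm_apply_apply_le_opNorm T hz hφ⟩

lemma le_nrad (T : X →L[𝕜] X) {z : X} {φ : X →L[𝕜] 𝕜}
    (hz : ‖z‖ = 1) (hφ : ‖φ‖ = 1) (hφz : φ z = 1) : ‖φ (T z)‖ ≤ nrad T :=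
  le_csSup (nrad_bddAbove T) ⟨z, φ, hz, hφ, hφz, rfl⟩

lemma nrad_nonneg (T : X →L[𝕜] X) : 0 ≤ nrad T :=
  Real.sSup_nonneg (by rintro r ⟨z, φ, -, -, -, rfl⟩; positivity)

lemma nrad_zero : nrad (0 : X →L[𝕜] X) = 0 :=
  le_antisymm (Real.sSup_le (by rintro r ⟨z, φ, -, -, -, rfl⟩; simp) le_rfl) (nrad_nonneg 0)

lemma nrad_add_le (T S : X →L[𝕜] X) : nrad (T + S) ≤ nrad T + nrad S := by
  refine Real.sSup_le ?_ (add_nonneg (nrad_nonneg T) (nrad_nonneg S))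
  rintro r ⟨z, φ, hz, hφ, hφz, rfl⟩
  calc ‖φ ((T + S) z)‖ = ‖φ (T z) + φ (S z)‖ := by rw [add_apply, map_add]
    _ ≤ ‖φ (T z)‖ + ‖φ (S z)‖ := norm_add_le _ _
    _ ≤ nrad T + nrad S := add_le_add (le_nrad T hz hφ hφz) (le_nrad S hz hφ hφz)

lemma norm_apply_le_nrad_mul (T : X →L[𝕜] X) {z : X} {φ : X →L[𝕜] 𝕜}
    (hφ : ‖φ‖ = 1) (hφz : φ z = ‖z‖) : ‖φ (T z)‖ ≤ nrad T * ‖z‖ := by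
  rcases eq_or_ne z 0 with rfl | hz
  · simp
  have hnz : (‖z‖ : 𝕜) ≠ 0 := RCLike.ofReal_ne_zero.2 (norm_ne_zero_iff.2 hz)
  have hφz' : φ ((‖z‖ : 𝕜)⁻¹ • z) = 1 := by rw [map_smul, smul_eq_mul, hφz, inv_mul_cancel₀ hnz]
  have key := le_nrad T (norm_smul_inv_norm hz) hφ hφz'
  rw [map_smul, map_smul, smul_eq_mul, norm_mul, norm_inv, RCLike.norm_ofReal, abs_norm,
    inv_mul_le_iff₀ (norm_pos_iff.2 hz)] at key
  linarith

lemma nrad_smulRight {f : X →L[𝕜] 𝕜} {x : X} (hf : ‖f‖ = 1) (hfx : f x = ‖x‖) :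
    nrad (f.smulRight x) = ‖x‖ := by
  refine le_antisymm ?_ ?_
  · calc nrad (f.smulRight x) ≤ ‖f.smulRight x‖ := nrad_le_opNorm _
      _ = ‖x‖ := by rw [f.norm_smulRight_apply, hf, one_mul]
  · have key := norm_apply_le_nrad_mul (f.smulRight x) hf hfx
    rw [ContinuousLinearMap.smulRight_apply, map_smul, hfx, smul_eq_mul, norm_mul,
      RCLike.norm_ofReal, abs_norm] at key
    rcases (norm_nonneg x).eq_or_lt with hx | hx
    · rw [← hx]; exact nrad_nonneg _
    · exact le_of_mul_le_mul_right key hx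

lemma apply_eq_norm_of_re_apply_eq_norm {φ : X →L[𝕜] 𝕜} (hφ : ‖φ‖ = 1) {z : X}
    (hre : RCLike.re (φ z) = ‖z‖) : φ z = ‖z‖ := by
  rw [← hre, RCLike.re_eq_self_of_le]
  calc ‖φ z‖ ≤ ‖φ‖ * ‖z‖ := φ.le_opNorm z
    _ = RCLike.re (φ z) := by rw [hφ, one_mul, hre]

lemma re_apply_le_norm {φ : X →L[𝕜] 𝕜} (hφ : ‖φ‖ = 1) (z : X) : RCLike.re (φ z) ≤ ‖z‖ :=
  calc RCLike.re (φ z) ≤ ‖φ z‖ := RCLike.re_le_norm _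
    _ ≤ ‖φ‖ * ‖z‖ := φ.le_opNorm z
    _ = ‖z‖ := by rw [hφ, one_mul]

lemma apply_eq_norm_of_norm_add_eq {φ : X →L[𝕜] 𝕜} (hφ : ‖φ‖ = 1) {x y : X}
    (hxy : ‖x + y‖ = ‖x‖ + ‖y‖) (hφxy : φ (x + y) = ‖x + y‖) :
    φ x = ‖x‖ ∧ φ y = ‖y‖ := by
  have hsum : RCLike.re (φ x) + RCLike.re (φ y) = ‖x‖ + ‖y‖ := by
    rw [← map_add, ← map_add, hφxy, RCLike.ofReal_re, hxy]
  have hx := re_apply_le_norm hφ x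
  have hy := re_apply_le_norm hφ y
  exact ⟨apply_eq_norm_of_re_apply_eq_norm hφ (by linarith),
    apply_eq_norm_of_re_apply_eq_norm hφ (by linarith)⟩

lemma eq_of_apply_eq_norm_of_smooth
    (hsmooth : ∀ x : X, ‖x‖ = 1 → ∃! f : X →L[𝕜] 𝕜, ‖f‖ = 1 ∧ f x = 1)
    {z : X} (hz : z ≠ 0) {φ ψ : X →L[𝕜] 𝕜} (hφ : ‖φ‖ = 1) (hφz : φ z = ‖z‖)
    (hψ : ‖ψ‖ = 1) (hψz : ψ z = ‖z‖) : φ = ψ := by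
  have hnz : (‖z‖ : 𝕜) ≠ 0 := RCLike.ofReal_ne_zero.2 (norm_ne_zero_iff.2 hz)
  have normalize : ∀ χ : X →L[𝕜] 𝕜, χ z = ‖z‖ → χ ((‖z‖ : 𝕜)⁻¹ • z) = 1 := fun χ hχ => by
    rw [map_smul, smul_eq_mul, hχ, inv_mul_cancel₀ hnz]
  exact (hsmooth _ (norm_smul_inv_norm hz)).unique ⟨hφ, normalize φ hφz⟩ ⟨hψ, normalize ψ hψz⟩

lemma norm_add_norm_le_nrad_add_smulRight
    (hsmooth : ∀ x : X, ‖x‖ = 1 → ∃! f : X →L[𝕜] 𝕜, ‖f‖ = 1 ∧ f x = 1)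
    {x y : X} (hx : x ≠ 0) (hy : y ≠ 0) {lam : 𝕜} (hlam : ‖lam‖ = 1)
    (hxy : ‖x + lam • y‖ = ‖x‖ + ‖y‖) {f g : X →L[𝕜] 𝕜}
    (hf : ‖f‖ = 1) (hfx : f x = ‖x‖) (hg : ‖g‖ = 1) (hgy : g y = ‖y‖) :
    ‖x‖ + ‖y‖ ≤ nrad (f.smulRight x + g.smulRight y) := by
  set u := x + lam • y
  have hly : ‖lam • y‖ = ‖y‖ := by rw [norm_smul, hlam, one_mul]
  have hu : ‖u‖ ≠ 0 := by rw [hxy]; positivity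
  obtain ⟨φ, hφ, hφu⟩ := exists_dual_vector 𝕜 u hu
  obtain ⟨hφx, hφy⟩ := apply_eq_norm_of_norm_add_eq hφ (hxy.trans (by rw [hly])) hφu
  have hfφ : f = φ := eq_of_apply_eq_norm_of_smooth hsmooth hx hf hfx hφ hφx
  have hgφ : g = lam • φ := eq_of_apply_eq_norm_of_smooth hsmooth hy hg hgy
    (by rw [norm_smul, hlam, hφ, one_mul])
    (by rw [smul_apply, smul_eq_mul, ← smul_eq_mul, ← map_smul, hφy, hly])
  have hTu : (f.smulRight x + g.smulRight y) u = (‖u‖ : 𝕜) • u := by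
    simp only [add_apply, ContinuousLinearMap.smulRight_apply, hfφ, hgφ,
      smul_apply, hφu, u, smul_add, smul_smul, smul_eq_mul, mul_comm lam]
  have key := norm_apply_le_nrad_mul (f.smulRight x + g.smulRight y) hφ hφu
  rw [hTu, map_smul, hφu, smul_eq_mul, norm_mul, RCLike.norm_ofReal, abs_norm] at key
  rw [← hxy]
  exact le_of_mul_le_mul_right key ((norm_nonneg u).lt_of_ne' hu)

theorem stmt13
    (hsmooth : ∀ x : X, ‖x‖ = 1 → ∃! f : X →L[𝕜] 𝕜, ‖f‖ = 1 ∧ f x = 1)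
    (x y : X) (hpar : ∃ lam : 𝕜, ‖lam‖ = 1 ∧ ‖x + lam • y‖ = ‖x‖ + ‖y‖)
    (f g : X →L[𝕜] 𝕜)
    (hf1 : ‖f‖ = 1) (hfx : f x = (‖x‖ : 𝕜))
    (hg1 : ‖g‖ = 1) (hgy : g y = (‖y‖ : 𝕜)) :
    NRadParallel (f.smulRight x) (g.smulRight y) := by
  refine ⟨1, norm_one, ?_⟩
  rw [one_smul]
  rcases eq_or_ne x 0 with rfl | hx
  · rw [f.smulRight_zero, zero_add, nrad_zero, zero_add]
  rcases eq_or_ne y 0 with rfl | hy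
  · rw [g.smulRight_zero, add_zero, nrad_zero, add_zero]
  obtain ⟨lam, hlam, hxy⟩ := hpar
  refine le_antisymm (nrad_add_le _ _) ?_
  rw [nrad_smulRight hf1 hfx, nrad_smulRight hg1 hgy]
  exact norm_add_norm_le_nrad_add_smulRight hsmooth hx hy hlam hxy hf1 hfx hg1 hgy
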